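/- arXiv:0807.2621 — 3 statements merged into one kernel-verified Lean document; each statement's English description precedes it below -/
import Mathlib

section
/- Let d ≥ 1, β > 0 and let U = V + g satisfy assumptions (A0) and (A1). Then for every a ∈ ℝ^{2d} and all indices i, j in {1,…,2d}: −C₀·C₂·Var_{ν_a}(id) ≤ Cov_{ν_a}( V'(a_i − ·), g'(a_j − ·) ) ≤ 0. -/
open MeasureTheory Real Filter

noncomputable section

/-- Boltzmann weight of the single odd site given the `2d` neighbouring values `a`. -/
def siteWeight (β : ℝ) (d : ℕ) (U : ℝ → ℝ) (a : Fin (2*d) → ℝ) (t : ℝ) : ℝ :=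
  Real.exp (-(2*β) * ∑ k, U (a k - t))

/-- Normalising constant `Z_a`. -/
def Zsite (β : ℝ) (d : ℕ) (U : ℝ → ℝ) (a : Fin (2*d) → ℝ) : ℝ :=
  ∫ t : ℝ, siteWeight β d U a t

/-- Single-site measure `ν_a`. -/
def nuSite (β : ℝ) (d : ℕ) (U : ℝ → ℝ) (a : Fin (2*d) → ℝ) : Measure ℝ :=
  volume.withDensity fun t => ENNReal.ofReal (siteWeight β d U a t / Zsite β d U a)

/-- Coarse-grained potential `F(a) = -log Z_a`. -/
def Fcg (β : ℝ) (d : ℕ) (U : ℝ → ℝ) (a : Fin (2*d) → ℝ) : ℝ :=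
  - Real.log (Zsite β d U a)

/-- Covariance of two functions under a measure on `ℝ`. -/
def covM (ν : Measure ℝ) (f g : ℝ → ℝ) : ℝ :=
  (∫ t, f t * g t ∂ν) - (∫ t, f t ∂ν) * (∫ t, g t ∂ν)

/-- Variance of the identity function under a measure on `ℝ`. -/
def varId (ν : Measure ℝ) : ℝ := covM ν (fun t => t) (fun t => t)

/-- First partial derivative. -/
def pd {n : ℕ} (Φ : (Fin n → ℝ) → ℝ) (i : Fin n) (a : Fin n → ℝ) : ℝ :=
  fderiv ℝ Φ a (Pi.single i 1)

/-- Second partial derivative. -/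
def pd2 {n : ℕ} (Φ : (Fin n → ℝ) → ℝ) (i j : Fin n) (a : Fin n → ℝ) : ℝ :=
  fderiv ℝ (fun x => fderiv ℝ Φ x (Pi.single i 1)) a (Pi.single j 1)

/-!
Writing `Cov(φ, ψ) = ½ ∬ (φ s - φ t) (ψ s - ψ t) dν(s) dν(t)`, both bounds become pointwise:
`s ↦ V'(aᵢ - s)` is antitone and `C₂`-Lipschitz, `s ↦ g'(aⱼ - s)` is monotone and
`C₀`-Lipschitz, so the integrand lies between `-C₀ C₂ (s - t)²` and `0`. By (A0) the density of
`ν_a` has Gaussian tails, so `ν_a` is a probability measure with a finite second moment, which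
makes all the integrals involved finite.
-/

open scoped NNReal

section Covariance

variable {ν : Measure ℝ}

theorem LipschitzWith.memLp_of_memLp_id [IsFiniteMeasure ν] {p : ENNReal} {K : ℝ≥0}
    {f : ℝ → ℝ} (hf : LipschitzWith K f) (hid : MemLp id p ν) : MemLp f p ν := by
  have hshift : MemLp (fun t => f t - f 0) p ν :=
    (hf.sub (LipschitzWith.const (f 0))).comp_memLp (sub_self _) hid
  convert hshift.add (memLp_const (f 0)) using 1
  ext t
  simp

variable [IsProbabilityMeasure ν] {f g : ℝ → ℝ}

theorem sub_mul_sub_eq_diag_sub_cross (f g : ℝ → ℝ) :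
    (fun p : ℝ × ℝ => (f p.1 - f p.2) * (g p.1 - g p.2)) = fun p =>
      (f p.1 * g p.1 + f p.2 * g p.2) - (f p.1 * g p.2 + g p.1 * f p.2) := by
  ext p; ring

theorem integrable_prod_sub_mul_sub (hf : MemLp f 2 ν) (hg : MemLp g 2 ν) :
    Integrable (fun p : ℝ × ℝ => (f p.1 - f p.2) * (g p.1 - g p.2)) (ν.prod ν) := by
  have hfg : Integrable (fun t => f t * g t) ν := hf.integrable_mul hg
  have hf1 := hf.integrable one_le_two
  have hg1 := hg.integrable one_le_two
  rw [sub_mul_sub_eq_diag_sub_cross]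
  exact ((hfg.comp_fst ν).fun_add (hfg.comp_snd ν)).sub
    ((hf1.mul_prod hg1).fun_add (hg1.mul_prod hf1))

theorem integral_prod_sub_mul_sub (hf : MemLp f 2 ν) (hg : MemLp g 2 ν) :
    ∫ p, (f p.1 - f p.2) * (g p.1 - g p.2) ∂ν.prod ν = 2 * covM ν f g := by
  have hfg : Integrable (fun t => f t * g t) ν := hf.integrable_mul hg
  have hf1 := hf.integrable one_le_two
  have hg1 := hg.integrable one_le_two
  rw [sub_mul_sub_eq_diag_sub_cross,
    integral_sub ((hfg.comp_fst ν).fun_add (hfg.comp_snd ν))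
      ((hf1.mul_prod hg1).fun_add (hg1.mul_prod hf1)),
    integral_add (hfg.comp_fst ν) (hfg.comp_snd ν),
    integral_add (hf1.mul_prod hg1) (hg1.mul_prod hf1),
    integral_fun_fst (fun t => f t * g t), integral_fun_snd (fun t => f t * g t),
    integral_prod_mul f g, integral_prod_mul g f, covM]
  simp only [probReal_univ, one_smul]
  ring

theorem covM_nonpos_of_antitone_of_monotone (hf2 : MemLp f 2 ν) (hg2 : MemLp g 2 ν)
    (hf : Antitone f) (hg : Monotone g) : covM ν f g ≤ 0 := by
  have hpair : ∀ p : ℝ × ℝ, (f p.1 - f p.2) * (g p.1 - g p.2) ≤ 0 := fun ⟨s, t⟩ => by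
    rcases le_total s t with hst | hts
    · exact mul_nonpos_of_nonneg_of_nonpos (sub_nonneg.2 (hf hst)) (sub_nonpos.2 (hg hst))
    · exact mul_nonpos_of_nonpos_of_nonneg (sub_nonpos.2 (hf hts)) (sub_nonneg.2 (hg hts))
  have := integral_nonpos (μ := ν.prod ν) hpair
  rw [integral_prod_sub_mul_sub hf2 hg2] at this
  linarith

theorem neg_mul_varId_le_covM (hid : MemLp id 2 ν) {Kf Kg : ℝ≥0} (hfL : LipschitzWith Kf f)
    (hgL : LipschitzWith Kg g) : -(Kf * Kg * varId ν) ≤ covM ν f g := by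
  have hpair : ∀ p : ℝ × ℝ,
      -(Kf * Kg * ((p.1 - p.2) * (p.1 - p.2))) ≤ (f p.1 - f p.2) * (g p.1 - g p.2) :=
    fun ⟨s, t⟩ => by
      have hprod : |(f s - f t) * (g s - g t)| ≤ Kf * |s - t| * (Kg * |s - t|) := by
        rw [abs_mul]
        exact mul_le_mul (hfL.norm_sub_le s t) (hgL.norm_sub_le s t) (abs_nonneg _)
          (by positivity)
      have hsq : Kf * |s - t| * (Kg * |s - t|) = Kf * Kg * ((s - t) * (s - t)) := by
        rw [← abs_mul_abs_self (s - t)]; ring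
      linarith [neg_abs_le ((f s - f t) * (g s - g t))]
  have hf := hfL.memLp_of_memLp_id hid
  have hg := hgL.memLp_of_memLp_id hid
  have := integral_mono ((integrable_prod_sub_mul_sub hid hid).const_mul (-(Kf * Kg : ℝ)))
    (integrable_prod_sub_mul_sub hf hg) fun p => by simpa [neg_mul] using hpair p
  rw [integral_const_mul, integral_prod_sub_mul_sub hid hid, integral_prod_sub_mul_sub hf hg]
    at this
  rw [show varId ν = covM ν id id from rfl]
  linarith

end Covariance

section Derivatives

variable {φ : ℝ → ℝ}

theorem lipschitzWith_deriv_const_sub (hφ : ContDiff ℝ 2 φ) {K : ℝ≥0}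
    (hK : ∀ s, |deriv (deriv φ) s| ≤ K) (c : ℝ) : LipschitzWith K fun t => deriv φ (c - t) := by
  have hL : LipschitzWith K (deriv φ) :=
    lipschitzWith_of_nnnorm_deriv_le hφ.differentiable_deriv_two fun s => hK s
  have h := hL.comp (IsometryEquiv.subLeft c).isometry.lipschitz
  rw [mul_one] at h
  exact h

theorem antitone_deriv_const_sub (hφ : ContDiff ℝ 2 φ) (h : ∀ s, 0 ≤ deriv (deriv φ) s)
    (c : ℝ) : Antitone fun t => deriv φ (c - t) :=
  (monotone_of_deriv_nonneg hφ.differentiable_deriv_two h).comp_antitone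
    fun _ _ hst => sub_le_sub_left hst c

theorem monotone_deriv_const_sub (hφ : ContDiff ℝ 2 φ) (h : ∀ s, deriv (deriv φ) s ≤ 0)
    (c : ℝ) : Monotone fun t => deriv φ (c - t) :=
  Antitone.comp (antitone_of_deriv_nonpos hφ.differentiable_deriv_two h)
    fun _ _ hst => sub_le_sub_left hst c

end Derivatives

section GaussianTilt

variable {φ : ℝ → ℝ} {b c : ℝ}

theorem integrable_exp_mul_pow_of_le (hφ : Measurable φ) (hb : 0 < b)
    (hle : ∀ t, φ t ≤ c - b * t ^ 2) (n : ℕ) : Integrable fun t => exp (φ t) * t ^ n := by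
  have hgauss : Integrable fun t : ℝ => t ^ n * exp (-b * t ^ 2) := by
    simpa [Real.rpow_natCast] using
      integrable_rpow_mul_exp_neg_mul_sq hb (s := n) (by linarith [n.cast_nonneg (α := ℝ)])
  refine (hgauss.const_mul (exp c)).mono
    (hφ.exp.mul (measurable_id.pow_const n)).aestronglyMeasurable (ae_of_all _ fun t => ?_)
  have hexp : exp (φ t) ≤ exp c * exp (-b * t ^ 2) := by
    rw [← exp_add]; exact exp_le_exp.2 (by linarith [hle t])
  simp only [norm_mul, norm_pow, Real.norm_of_nonneg (exp_pos _).le]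
  nlinarith [pow_nonneg (norm_nonneg t) n]

theorem isProbabilityMeasure_tilted_of_le (hφ : Measurable φ) (hb : 0 < b)
    (hle : ∀ t, φ t ≤ c - b * t ^ 2) : IsProbabilityMeasure (volume.tilted φ) :=
  isProbabilityMeasure_tilted (by simpa using integrable_exp_mul_pow_of_le hφ hb hle 0)

theorem memLp_id_tilted_of_le (hφ : Measurable φ) (hb : 0 < b)
    (hle : ∀ t, φ t ≤ c - b * t ^ 2) : MemLp id 2 (volume.tilted φ) := by
  rw [memLp_two_iff_integrable_sq aestronglyMeasurable_id,
    integrable_tilted_iff (by simpa using integrable_exp_mul_pow_of_le hφ hb hle 0)]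
  exact integrable_exp_mul_pow_of_le hφ hb hle 2

end GaussianTilt

section SiteMeasure

variable {β A B : ℝ} {d : ℕ} {U : ℝ → ℝ}

theorem nuSite_eq_tilted (a : Fin (2 * d) → ℝ) :
    nuSite β d U a = volume.tilted fun t => -(2 * β) * ∑ k, U (a k - t) := rfl

theorem neg_two_mul_sum_le (hβ : 0 ≤ β) (hA : 0 ≤ A) (hA0 : ∀ η, A * η ^ 2 - B ≤ U η)
    (a : Fin (2 * d) → ℝ) (t : ℝ) :
    -(2 * β) * ∑ k, U (a k - t) ≤ 2 * β * ∑ k, (A * a k ^ 2 + B) - 2 * β * d * A * t ^ 2 := by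
  have hterm : ∀ k, A * t ^ 2 / 2 - (A * a k ^ 2 + B) ≤ U (a k - t) := fun k => by
    nlinarith [hA0 (a k - t), mul_nonneg hA (sq_nonneg (t - 2 * a k))]
  have hsum := Finset.sum_le_sum fun k (_ : k ∈ Finset.univ) => hterm k
  rw [Finset.sum_sub_distrib, Finset.sum_const, Finset.card_univ, Fintype.card_fin,
    nsmul_eq_mul] at hsum
  push_cast at hsum
  nlinarith [mul_le_mul_of_nonneg_left hsum (by positivity : (0 : ℝ) ≤ 2 * β)]

end SiteMeasure

theorem statement14_general
    {d : ℕ} {β A B C₀ C₁ C₂ : ℝ} {U V g : ℝ → ℝ}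
    (hd : 1 ≤ d) (hβ : 0 < β)
    -- (A0)
    (hUcont : Continuous U) (hA : 0 < A) (hA0 : ∀ η : ℝ, A * η ^ 2 - B ≤ U η)
    -- (A1)
    (hV : ContDiff ℝ 2 V) (hg : ContDiff ℝ 2 g)
    (hC₁ : 0 < C₁)
    (hV'' : ∀ s, C₁ ≤ deriv (deriv V) s ∧ deriv (deriv V) s ≤ C₂)
    (hg'' : ∀ s, -C₀ ≤ deriv (deriv g) s ∧ deriv (deriv g) s ≤ 0) :
    ∀ (a : Fin (2*d) → ℝ) (i j : Fin (2*d)),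
      -(C₀ * C₂ * varId (nuSite β d U a))
          ≤ covM (nuSite β d U a)
              (fun t => deriv V (a i - t)) (fun t => deriv g (a j - t)) ∧
      covM (nuSite β d U a)
              (fun t => deriv V (a i - t)) (fun t => deriv g (a j - t)) ≤ 0 := by
  intro a i j
  have hφ : Measurable fun t => -(2 * β) * ∑ k, U (a k - t) := by fun_prop
  have hb : 0 < 2 * β * d * A := by
    have : (1 : ℝ) ≤ d := by exact_mod_cast hd
    positivity
  have hle := neg_two_mul_sum_le hβ.le hA.le hA0 a
  have := isProbabilityMeasure_tilted_of_le hφ hb hle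
  have hid := memLp_id_tilted_of_le hφ hb hle
  have hC₂ : 0 ≤ C₂ := by linarith [hV'' 0]
  have hC₀ : 0 ≤ C₀ := by linarith [hg'' 0]
  have hVL : LipschitzWith ⟨C₂, hC₂⟩ fun t => deriv V (a i - t) :=
    lipschitzWith_deriv_const_sub hV (K := ⟨C₂, hC₂⟩)
      (fun s => abs_le.2 ⟨by linarith [hV'' s], (hV'' s).2⟩) _
  have hgL : LipschitzWith ⟨C₀, hC₀⟩ fun t => deriv g (a j - t) :=
    lipschitzWith_deriv_const_sub hg (K := ⟨C₀, hC₀⟩)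
      (fun s => abs_le.2 ⟨(hg'' s).1, by linarith [hg'' s]⟩) _
  have hlow := neg_mul_varId_le_covM hid hVL hgL
  change -(C₂ * C₀ * _) ≤ _ at hlow
  rw [nuSite_eq_tilted]
  refine ⟨by linarith, covM_nonpos_of_antitone_of_monotone (hVL.memLp_of_memLp_id hid)
    (hgL.memLp_of_memLp_id hid) ?_ ?_⟩
  · exact antitone_deriv_const_sub hV (fun s => by linarith [hV'' s]) _
  · exact monotone_deriv_const_sub hg (fun s => (hg'' s).2) _

/-- **Statement 14** (bounds on the `V'-g'` covariance in terms of the variance). -/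
theorem statement14
    {d : ℕ} {β A B C₀ C₁ C₂ : ℝ} {U V g : ℝ → ℝ}
    (hd : 1 ≤ d) (hβ : 0 < β)
    -- (A0)
    (hUcont : Continuous U) (hA : 0 < A) (hA0 : ∀ η : ℝ, A * η ^ 2 - B ≤ U η)
    -- (A1)
    (hsum : ∀ s, U s = V s + g s)
    (hV : ContDiff ℝ 2 V) (hg : ContDiff ℝ 2 g)
    (hC₁ : 0 < C₁) (hC₁₂ : C₁ < C₂) (hC₂₀ : C₂ < C₀)
    (hV'' : ∀ s, C₁ ≤ deriv (deriv V) s ∧ deriv (deriv V) s ≤ C₂)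
    (hg'' : ∀ s, -C₀ ≤ deriv (deriv g) s ∧ deriv (deriv g) s ≤ 0) :
    ∀ (a : Fin (2*d) → ℝ) (i j : Fin (2*d)),
      -(C₀ * C₂ * varId (nuSite β d U a))
          ≤ covM (nuSite β d U a)
              (fun t => deriv V (a i - t)) (fun t => deriv g (a j - t)) ∧
      covM (nuSite β d U a)
              (fun t => deriv V (a i - t)) (fun t => deriv g (a j - t)) ≤ 0 :=
  statement14_general hd hβ hUcont hA hA0 hV hg hC₁ hV'' hg''

end
end

section
/- Let d ≥ 1 and let U = V + g satisfy assumptions (A0) and (A1) with C₁ = 1, and take inverse temperature β = 1. Then for every a ∈ ℝ^{2d} and all indices i ≠ j in {1,…,2d}: Cov_{ν_a}( V'(a_i − ·), V'(a_j − ·) ) ≥ 1/(4d·C₂). -/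
/-!
Write `ν` for `nuSite 1 d U a`, whose density is proportional to `exp (-H)` with
`H t = 2 ∑ₖ U (a k - t)`, and `fₖ t = V' (a k - t)`. Integration by parts gives
`Cov_ν(t, H') = 1`. Since `2 Cov(f, g) = E[(f X - f Y)(g X - g Y)]` for independent copies
`X, Y ∼ ν`, covariances can be compared pointwise:
`(x - y)(H' x - H' y) ≤ 4 d C₂ (x - y)²` because `H'' = 2 ∑ₖ U''(a k - ·) ≤ 4 d C₂` (as `g'' ≤ 0`),
and `(x - y)² ≤ (fᵢ x - fᵢ y)(fⱼ x - fⱼ y)` because `fᵢ, fⱼ` have slope `≤ -1` (as `V'' ≥ 1`).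
Hence `1 = Cov(t, H') ≤ 4 d C₂ Var(t) ≤ 4 d C₂ Cov(fᵢ, fⱼ)`. The Gaussian bound (A0) on the
density makes every function of linear growth square integrable.
-/

open MeasureTheory Real Filter

noncomputable section

open scoped NNReal ENNReal

section Covariance

variable {μ : Measure ℝ} {f g f' g' : ℝ → ℝ}

lemma integrable_sub_mul_sub_prod [IsFiniteMeasure μ] (hf : MemLp f 2 μ) (hg : MemLp g 2 μ) :
    Integrable (fun p : ℝ × ℝ => (f p.1 - f p.2) * (g p.1 - g p.2)) (μ.prod μ) := by
  have hf1 := hf.integrable one_le_two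
  have hg1 := hg.integrable one_le_two
  have hfg : Integrable (fun t => f t * g t) μ := hf.integrable_mul hg
  have h1 : Integrable (fun _ : ℝ => (1 : ℝ)) μ := integrable_const 1
  refine ((((hfg.mul_prod h1).add (h1.mul_prod hfg)).sub (hf1.mul_prod hg1)).sub
    (hg1.mul_prod hf1)).congr (ae_of_all _ fun p => ?_)
  simp only [Pi.add_apply, Pi.sub_apply]
  ring

lemma integral_sub_mul_sub_prod [IsProbabilityMeasure μ] (hf : MemLp f 2 μ) (hg : MemLp g 2 μ) :
    ∫ p : ℝ × ℝ, (f p.1 - f p.2) * (g p.1 - g p.2) ∂(μ.prod μ) = 2 * covM μ f g := by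
  have hf1 := hf.integrable one_le_two
  have hg1 := hg.integrable one_le_two
  have hfg : Integrable (fun t => f t * g t) μ := hf.integrable_mul hg
  have h1 : Integrable (fun _ : ℝ => (1 : ℝ)) μ := integrable_const 1
  have hdiag : Integrable (fun p : ℝ × ℝ => f p.1 * g p.1 * 1 + 1 * (f p.2 * g p.2)) (μ.prod μ) :=
    (hfg.mul_prod h1).add (h1.mul_prod hfg)
  have hdiag' : Integrable (fun p : ℝ × ℝ => f p.1 * g p.1 * 1 + 1 * (f p.2 * g p.2)
      - f p.1 * g p.2) (μ.prod μ) := hdiag.sub (hf1.mul_prod hg1)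
  have expand : (fun p : ℝ × ℝ => (f p.1 - f p.2) * (g p.1 - g p.2)) = fun p =>
      f p.1 * g p.1 * 1 + 1 * (f p.2 * g p.2) - f p.1 * g p.2 - g p.1 * f p.2 := by
    ext p; ring
  rw [expand, integral_sub hdiag' (hg1.mul_prod hf1), integral_sub hdiag (hf1.mul_prod hg1),
    integral_add (hfg.mul_prod h1) (h1.mul_prod hfg),
    integral_prod_mul (fun t => f t * g t) (fun _ => (1 : ℝ)),
    integral_prod_mul (fun _ => (1 : ℝ)) (fun t => f t * g t), integral_prod_mul f g,
    integral_prod_mul g f]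
  simp only [integral_const, probReal_univ, smul_eq_mul, mul_one, one_mul, covM]
  ring

lemma covM_le_mul_covM_of_sub_mul_sub_le [IsProbabilityMeasure μ] (c : ℝ)
    (hf : MemLp f 2 μ) (hg : MemLp g 2 μ) (hf' : MemLp f' 2 μ) (hg' : MemLp g' 2 μ)
    (h : ∀ x y, (f x - f y) * (g x - g y) ≤ c * ((f' x - f' y) * (g' x - g' y))) :
    covM μ f g ≤ c * covM μ f' g' := by
  have hmono := integral_mono (integrable_sub_mul_sub_prod hf hg)
    ((integrable_sub_mul_sub_prod hf' hg').const_mul c) fun p => h p.1 p.2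
  rw [integral_const_mul, integral_sub_mul_sub_prod hf hg, integral_sub_mul_sub_prod hf' hg']
    at hmono
  linarith

end Covariance

section Density

variable {α : Type*} [MeasurableSpace α] {μ : Measure α} {ρ : α → ℝ}

lemma integral_withDensity_ofReal (hρ : Measurable ρ) (hρ0 : ∀ x, 0 ≤ ρ x) (φ : α → ℝ) :
    ∫ x, φ x ∂μ.withDensity (fun x => ENNReal.ofReal (ρ x)) = ∫ x, ρ x * φ x ∂μ := by
  rw [integral_withDensity_eq_integral_toReal_smul hρ.ennreal_ofReal
    (ae_of_all _ fun _ => ENNReal.ofReal_lt_top)]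
  simp only [ENNReal.toReal_ofReal (hρ0 _), smul_eq_mul]

lemma integrable_withDensity_ofReal_iff (hρ : Measurable ρ) (hρ0 : ∀ x, 0 ≤ ρ x) {φ : α → ℝ} :
    Integrable φ (μ.withDensity fun x => ENNReal.ofReal (ρ x)) ↔
      Integrable (fun x => ρ x * φ x) μ := by
  rw [integrable_withDensity_iff_integrable_smul' hρ.ennreal_ofReal
    (ae_of_all _ fun _ => ENNReal.ofReal_lt_top)]
  simp only [ENNReal.toReal_ofReal (hρ0 _), smul_eq_mul]

lemma isProbabilityMeasure_withDensity_ofReal (hρ0 : ∀ x, 0 ≤ ρ x) (hρ1 : ∫ x, ρ x ∂μ = 1) :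
    IsProbabilityMeasure (μ.withDensity fun x => ENNReal.ofReal (ρ x)) := by
  have hint : Integrable ρ μ := Integrable.of_integral_ne_zero (by simp [hρ1])
  constructor
  rw [withDensity_apply _ MeasurableSet.univ, setLIntegral_univ,
    ← ofReal_integral_eq_lintegral_ofReal hint (ae_of_all _ hρ0), hρ1, ENNReal.ofReal_one]

end Density

lemma covM_id_eq_one_of_hasDerivAt {ν : Measure ℝ} {ρ h : ℝ → ℝ}
    (hν : ν = volume.withDensity fun t => ENNReal.ofReal (ρ t))
    (hρ : ∀ t, HasDerivAt ρ (-h t * ρ t) t) (hρ0 : ∀ t, 0 ≤ ρ t) (hρ1 : ∫ t, ρ t = 1)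
    (hid : Integrable (fun t => t) ν) (hh : Integrable h ν)
    (hidh : Integrable (fun t => t * h t) ν) :
    covM ν (fun t => t) h = 1 := by
  subst hν
  have hmeas : Measurable ρ :=
    (continuous_iff_continuousAt.2 fun t => (hρ t).continuousAt).measurable
  rw [integrable_withDensity_ofReal_iff hmeas hρ0] at hid hh hidh
  have hρint : Integrable ρ := Integrable.of_integral_ne_zero (by simp [hρ1])
  have hmean : ∫ t, -h t * ρ t = 0 :=
    integral_eq_zero_of_hasDerivAt_of_integrable hρ
      (hh.neg.congr (ae_of_all _ fun t => by simp only [Pi.neg_apply]; ring)) hρint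
  have hmoment : ∫ t, t * (-h t * ρ t) = -∫ t, 1 * ρ t :=
    integral_mul_deriv_eq_deriv_mul_of_integrable (fun t _ => hasDerivAt_id' t) (fun t _ => hρ t)
      (hidh.neg.congr (ae_of_all _ fun t => by simp only [Pi.neg_apply, Pi.mul_apply]; ring))
      (by simpa [Pi.mul_def] using hρint) (by simpa [Pi.mul_def, mul_comm] using hid)
  have e1 : ∫ t, ρ t * h t = 0 := by
    rw [← neg_eq_zero, ← integral_neg, ← hmean]; congr 1; ext t; ring
  have e2 : ∫ t, ρ t * (t * h t) = 1 := calc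
    _ = -∫ t, t * (-h t * ρ t) := by rw [← integral_neg]; congr 1; ext t; ring
    _ = 1 := by rw [hmoment, neg_neg]; simpa using hρ1
  simp only [covM, integral_withDensity_ofReal hmeas hρ0, e1, e2]
  ring

section Calculus

variable {φ φ' : ℝ → ℝ} {K : ℝ}

lemma sub_mul_sub_le_of_hasDerivAt_le (hφ : ∀ t, HasDerivAt φ (φ' t) t) (h : ∀ t, φ' t ≤ K)
    (x y : ℝ) : (x - y) * (φ x - φ y) ≤ K * (x - y) ^ 2 := by
  have hmono : Monotone fun t => K * t - φ t :=
    monotone_of_hasDerivAt_nonneg (fun t => ((hasDerivAt_id' t).const_mul K).sub (hφ t))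
      fun t => by simp only [mul_one, Pi.zero_apply, sub_nonneg, h t]
  rcases le_total x y with hxy | hxy
  · nlinarith [hmono hxy]
  · nlinarith [hmono hxy]

lemma sq_sub_le_sub_mul_sub_of_hasDerivAt_le_neg_one {u u' v v' : ℝ → ℝ}
    (hu : ∀ t, HasDerivAt u (u' t) t) (hu' : ∀ t, u' t ≤ -1)
    (hv : ∀ t, HasDerivAt v (v' t) t) (hv' : ∀ t, v' t ≤ -1) (x y : ℝ) :
    (x - y) ^ 2 ≤ (u x - u y) * (v x - v y) := by
  rcases eq_or_ne x y with rfl | hxy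
  · simp
  have hδ : 0 < (x - y) ^ 2 := sq_pos_of_ne_zero (sub_ne_zero.2 hxy)
  have h₁ := sub_mul_sub_le_of_hasDerivAt_le hu hu' x y
  have h₂ := sub_mul_sub_le_of_hasDerivAt_le hv hv' x y
  nlinarith [mul_le_mul_of_nonneg_left h₁ hδ.le, mul_le_mul_of_nonneg_left h₂ hδ.le]

lemma lipschitzWith_of_hasDerivAt_abs_le (hφ : ∀ t, HasDerivAt φ (φ' t) t)
    (h : ∀ t, |φ' t| ≤ K) : LipschitzWith K.toNNReal φ :=
  lipschitzWith_of_nnnorm_deriv_le (fun t => (hφ t).differentiableAt) fun t => by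
    rw [(hφ t).deriv, ← NNReal.coe_le_coe, coe_nnnorm, Real.norm_eq_abs]
    exact (h t).trans (Real.le_coe_toNNReal K)

lemma memLp_of_hasDerivAt_abs_le {μ : Measure ℝ} [IsFiniteMeasure μ] {p : ℝ≥0∞}
    (hid : MemLp (fun t => t) p μ) (hφ : ∀ t, HasDerivAt φ (φ' t) t) (h : ∀ t, |φ' t| ≤ K) :
    MemLp φ p μ := by
  have hlip := (lipschitzWith_of_hasDerivAt_abs_le hφ h).sub (LipschitzWith.const (φ 0))
  convert (hlip.comp_memLp (sub_self _) hid).add (memLp_const (φ 0)) using 1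
  ext t
  simp

end Calculus

lemma one_le_mul_covM_of_hasDerivAt_density {ν : Measure ℝ} {ρ h f₁ f₂ : ℝ → ℝ} {K : ℝ}
    (hν : ν = volume.withDensity fun t => ENNReal.ofReal (ρ t))
    (hρ : ∀ t, HasDerivAt ρ (-h t * ρ t) t) (hρ0 : ∀ t, 0 ≤ ρ t) (hρ1 : ∫ t, ρ t = 1)
    (hid : MemLp (fun t => t) 2 ν) (hh : MemLp h 2 ν) (hf₁ : MemLp f₁ 2 ν) (hf₂ : MemLp f₂ 2 ν)
    (hK : 0 ≤ K) (hhK : ∀ x y, (x - y) * (h x - h y) ≤ K * (x - y) ^ 2)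
    (hf : ∀ x y, (x - y) ^ 2 ≤ (f₁ x - f₁ y) * (f₂ x - f₂ y)) :
    1 ≤ K * covM ν f₁ f₂ := by
  have : IsProbabilityMeasure ν := hν ▸ isProbabilityMeasure_withDensity_ofReal hρ0 hρ1
  calc 1 = covM ν (fun t => t) h :=
        (covM_id_eq_one_of_hasDerivAt hν hρ hρ0 hρ1 (hid.integrable one_le_two)
          (hh.integrable one_le_two) (hid.integrable_mul hh)).symm
    _ ≤ K * covM ν f₁ f₂ :=
        covM_le_mul_covM_of_sub_mul_sub_le K hid hh hf₁ hf₂ fun x y =>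
          (hhK x y).trans (mul_le_mul_of_nonneg_left (hf x y) hK)

section Site

variable {β A B : ℝ} {d : ℕ} {U U' U'' : ℝ → ℝ} {a : Fin (2*d) → ℝ}

/-- `H'` for the energy `H t = 2β ∑ₖ U (a k - t)` of `siteWeight`, when `U' = deriv U`. -/
def siteEnergyDeriv (β : ℝ) (d : ℕ) (U' : ℝ → ℝ) (a : Fin (2*d) → ℝ) (t : ℝ) : ℝ :=
  -(2 * β * ∑ k, U' (a k - t))

lemma hasDerivAt_siteWeight (hU : ∀ s, HasDerivAt U (U' s) s) (t : ℝ) :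
    HasDerivAt (siteWeight β d U a) (-siteEnergyDeriv β d U' a t * siteWeight β d U a t) t := by
  have := ((HasDerivAt.fun_sum (u := Finset.univ) fun k _ =>
    (hU (a k - t)).comp_const_sub (a k) t).const_mul (-(2 * β))).exp
  refine this.congr_deriv ?_
  simp only [siteEnergyDeriv, siteWeight, Finset.sum_neg_distrib]
  ring

lemma hasDerivAt_siteEnergyDeriv (hU' : ∀ s, HasDerivAt U' (U'' s) s) (t : ℝ) :
    HasDerivAt (siteEnergyDeriv β d U' a) (2 * β * ∑ k, U'' (a k - t)) t := by
  have := ((HasDerivAt.fun_sum (u := Finset.univ) fun k _ =>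
    (hU' (a k - t)).comp_const_sub (a k) t).const_mul (2 * β)).fun_neg
  refine this.congr_deriv ?_
  simp only [Finset.sum_neg_distrib]
  ring

lemma siteWeight_le_gaussian (hβ : 0 ≤ β) (hA : 0 ≤ A) (hA0 : ∀ η, A * η ^ 2 - B ≤ U η)
    (i : Fin (2*d)) (t : ℝ) :
    siteWeight β d U a t ≤ exp (2 * β * (A * a i ^ 2 + 2 * d * B)) * exp (-(β * A) * t ^ 2) := by
  rw [siteWeight, ← Real.exp_add, Real.exp_le_exp]
  have hsum : A * (a i - t) ^ 2 - 2 * d * B ≤ ∑ k, U (a k - t) := calc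
    _ ≤ ∑ k, (A * (a k - t) ^ 2 - B) := by
        rw [Finset.sum_sub_distrib, Finset.sum_const, Finset.card_univ, Fintype.card_fin,
          nsmul_eq_mul]
        push_cast
        gcongr
        exact Finset.single_le_sum (f := fun k => A * (a k - t) ^ 2) (fun k _ => by positivity)
          (Finset.mem_univ i)
    _ ≤ _ := Finset.sum_le_sum fun k _ => hA0 _
  nlinarith [mul_nonneg (mul_nonneg hβ hA) (sq_nonneg (t - 2 * a i)),
    mul_le_mul_of_nonneg_left hsum hβ]

lemma integrable_pow_mul_siteWeight (hβ : 0 < β) (hA : 0 < A) (hA0 : ∀ η, A * η ^ 2 - B ≤ U η)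
    (hU : Continuous U) (i : Fin (2*d)) (n : ℕ) :
    Integrable fun t => t ^ n * siteWeight β d U a t := by
  have hgauss : Integrable fun t : ℝ => t ^ n * exp (-(β * A) * t ^ 2) := by
    simpa [Real.rpow_natCast] using integrable_rpow_mul_exp_neg_mul_sq (mul_pos hβ hA) (s := n)
      (by linarith [n.cast_nonneg (α := ℝ)])
  refine (hgauss.norm.const_mul (exp (2 * β * (A * a i ^ 2 + 2 * d * B)))).mono'
    (by unfold siteWeight; fun_prop) (ae_of_all _ fun t => ?_)
  rw [norm_mul, norm_mul, Real.norm_of_nonneg (exp_pos _).le,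
    Real.norm_of_nonneg (r := siteWeight β d U a t) (exp_pos _).le, mul_left_comm]
  exact mul_le_mul_of_nonneg_left (siteWeight_le_gaussian hβ.le hA.le hA0 i t) (norm_nonneg _)

lemma zsite_pos (hβ : 0 < β) (hA : 0 < A) (hA0 : ∀ η, A * η ^ 2 - B ≤ U η) (hU : Continuous U)
    (i : Fin (2*d)) : 0 < Zsite β d U a := by
  have := integrable_pow_mul_siteWeight (a := a) hβ hA hA0 hU i 0
  simp only [pow_zero, one_mul] at this
  exact integral_exp_pos this

lemma integral_siteWeight_div_zsite (hβ : 0 < β) (hA : 0 < A) (hA0 : ∀ η, A * η ^ 2 - B ≤ U η)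
    (hU : Continuous U) (i : Fin (2*d)) :
    ∫ t, siteWeight β d U a t / Zsite β d U a = 1 := by
  rw [integral_div]
  exact div_self (zsite_pos hβ hA hA0 hU i).ne'

lemma isProbabilityMeasure_nuSite (hβ : 0 < β) (hA : 0 < A) (hA0 : ∀ η, A * η ^ 2 - B ≤ U η)
    (hU : Continuous U) (i : Fin (2*d)) : IsProbabilityMeasure (nuSite β d U a) :=
  isProbabilityMeasure_withDensity_ofReal
    (fun _ => div_nonneg (exp_pos _).le (zsite_pos hβ hA hA0 hU i).le)
    (integral_siteWeight_div_zsite hβ hA hA0 hU i)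

lemma memLp_id_nuSite (hβ : 0 < β) (hA : 0 < A) (hA0 : ∀ η, A * η ^ 2 - B ≤ U η)
    (hU : Continuous U) (i : Fin (2*d)) : MemLp (fun t => t) 2 (nuSite β d U a) := by
  have hmeas : Measurable fun t => siteWeight β d U a t / Zsite β d U a := by
    unfold siteWeight; fun_prop
  refine (memLp_two_iff_integrable_sq aestronglyMeasurable_id).2 ?_
  rw [nuSite, integrable_withDensity_ofReal_iff hmeas fun _ => div_nonneg (exp_pos _).le
      (zsite_pos hβ hA hA0 hU i).le]
  refine ((integrable_pow_mul_siteWeight (a := a) hβ hA hA0 hU i 2).div_const (Zsite β d U a)).congr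
    (ae_of_all _ fun t => ?_)
  simp only [id]
  ring

theorem one_le_mul_covM_nuSite {K M : ℝ} {W W' : ℝ → ℝ}
    (hβ : 0 < β) (hA : 0 < A) (hA0 : ∀ η, A * η ^ 2 - B ≤ U η)
    (hU : ∀ s, HasDerivAt U (U' s) s) (hU' : ∀ s, HasDerivAt U' (U'' s) s)
    (hK : 0 ≤ K) (hU''K : ∀ s, U'' s ≤ K) (hU''M : ∀ s, |U'' s| ≤ M)
    (hW : ∀ s, HasDerivAt W (W' s) s) (hW'1 : ∀ s, 1 ≤ W' s) (hW'M : ∀ s, |W' s| ≤ M)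
    (a : Fin (2*d) → ℝ) (i j : Fin (2*d)) :
    1 ≤ 4 * d * β * K * covM (nuSite β d U a) (fun t => W (a i - t)) (fun t => W (a j - t)) := by
  have hUc : Continuous U := continuous_iff_continuousAt.2 fun s => (hU s).continuousAt
  have := isProbabilityMeasure_nuSite (a := a) hβ hA hA0 hUc i
  have hid := memLp_id_nuSite (a := a) hβ hA hA0 hUc i
  have hZ := zsite_pos (a := a) hβ hA hA0 hUc i
  have hf (k : Fin (2*d)) (t : ℝ) : HasDerivAt (fun t => W (a k - t)) (-W' (a k - t)) t :=
    (hW _).comp_const_sub (a k) t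
  have hfM (k : Fin (2*d)) (t : ℝ) : |-W' (a k - t)| ≤ M := by rw [abs_neg]; exact hW'M _
  have hf1 (k : Fin (2*d)) (t : ℝ) : -W' (a k - t) ≤ -1 := by linarith [hW'1 (a k - t)]
  have hh := hasDerivAt_siteEnergyDeriv (β := β) (a := a) hU'
  have hhK (t : ℝ) : 2 * β * ∑ k, U'' (a k - t) ≤ 4 * d * β * K := by
    have := Finset.sum_le_card_nsmul Finset.univ (fun k => U'' (a k - t)) K fun k _ => hU''K _
    simp only [Finset.card_univ, Fintype.card_fin, nsmul_eq_mul] at this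
    push_cast at this
    nlinarith
  have hhM (t : ℝ) : |2 * β * ∑ k, U'' (a k - t)| ≤ 4 * d * β * M := by
    have := Finset.sum_le_card_nsmul Finset.univ (fun k => |U'' (a k - t)|) M fun k _ => hU''M _
    simp only [Finset.card_univ, Fintype.card_fin, nsmul_eq_mul] at this
    push_cast at this
    rw [abs_mul, abs_of_pos (by positivity : (0 : ℝ) < 2 * β)]
    nlinarith [Finset.abs_sum_le_sum_abs (fun k => U'' (a k - t)) Finset.univ]
  exact one_le_mul_covM_of_hasDerivAt_density
    (ρ := fun t => siteWeight β d U a t / Zsite β d U a) rfl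
    (fun t => ((hasDerivAt_siteWeight hU t).div_const _).congr_deriv (by ring))
    (fun _ => div_nonneg (exp_pos _).le hZ.le) (integral_siteWeight_div_zsite hβ hA hA0 hUc i)
    hid (memLp_of_hasDerivAt_abs_le hid hh hhM) (memLp_of_hasDerivAt_abs_le hid (hf i) (hfM i))
    (memLp_of_hasDerivAt_abs_le hid (hf j) (hfM j)) (by positivity)
    (sub_mul_sub_le_of_hasDerivAt_le hh hhK)
    (sq_sub_le_sub_mul_sub_of_hasDerivAt_le_neg_one (hf i) (hf1 i) (hf j) (hf1 j))

end Site

theorem statement17_general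
    {d : ℕ} {A B C₀ C₂ : ℝ} {U V g : ℝ → ℝ}
    -- (A0)
    (hA : 0 < A) (hA0 : ∀ η : ℝ, A * η ^ 2 - B ≤ U η)
    -- (A1) with C₁ = 1
    (hsum : ∀ s, U s = V s + g s)
    (hV : ContDiff ℝ 2 V) (hg : ContDiff ℝ 2 g)
    (hV'' : ∀ s, 1 ≤ deriv (deriv V) s ∧ deriv (deriv V) s ≤ C₂)
    (hg'' : ∀ s, -C₀ ≤ deriv (deriv g) s ∧ deriv (deriv g) s ≤ 0) :
    ∀ (a : Fin (2*d) → ℝ) (i j : Fin (2*d)), i ≠ j →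
      1/(4*d*C₂) ≤ covM (nuSite 1 d U a)
        (fun t => deriv V (a i - t)) (fun t => deriv V (a j - t)) := by
  intro a i j _
  obtain rfl : U = fun s => V s + g s := funext hsum
  have hV' (s : ℝ) : HasDerivAt (deriv V) (deriv (deriv V) s) s :=
    (hV.differentiable_deriv_two s).hasDerivAt
  have hg' (s : ℝ) : HasDerivAt (deriv g) (deriv (deriv g) s) s :=
    (hg.differentiable_deriv_two s).hasDerivAt
  have hV''M (s : ℝ) : |deriv (deriv V) s| ≤ C₂ + C₀ := by
    rw [abs_le]; constructor <;> linarith [hV'' s, hg'' s]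
  have hU''M (s : ℝ) : |deriv (deriv V) s + deriv (deriv g) s| ≤ C₂ + C₀ := by
    rw [abs_le]; constructor <;> linarith [hV'' s, hg'' s]
  have hC₂ : 0 < C₂ := by linarith [hV'' 0]
  have hd : (0 : ℝ) < d := by exact_mod_cast Nat.pos_of_mul_pos_left i.pos
  have key := one_le_mul_covM_nuSite one_pos hA hA0
    (fun s => (hV.differentiable two_ne_zero s).hasDerivAt.add
      (hg.differentiable two_ne_zero s).hasDerivAt)
    (fun s => (hV' s).add (hg' s)) hC₂.le (fun s => by linarith [hV'' s, hg'' s]) hU''M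
    hV' (fun s => (hV'' s).1) hV''M a i j
  rw [div_le_iff₀ (by positivity)]
  linarith

/-- lower bound (4.18) at `β = 1`, `C₁ = 1`. -/
theorem statement17
    {d : ℕ} {A B C₀ C₂ : ℝ} {U V g : ℝ → ℝ}
    (hd : 1 ≤ d)
    -- (A0)
    (hUcont : Continuous U) (hA : 0 < A) (hA0 : ∀ η : ℝ, A * η ^ 2 - B ≤ U η)
    -- (A1) with C₁ = 1
    (hsum : ∀ s, U s = V s + g s)
    (hV : ContDiff ℝ 2 V) (hg : ContDiff ℝ 2 g)
    (hC₂ : 1 < C₂) (hC₂₀ : C₂ < C₀)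
    (hV'' : ∀ s, 1 ≤ deriv (deriv V) s ∧ deriv (deriv V) s ≤ C₂)
    (hg'' : ∀ s, -C₀ ≤ deriv (deriv g) s ∧ deriv (deriv g) s ≤ 0) :
    ∀ (a : Fin (2*d) → ℝ) (i j : Fin (2*d)), i ≠ j →
      1/(4*d*C₂) ≤ covM (nuSite 1 d U a)
        (fun t => deriv V (a i - t)) (fun t => deriv V (a j - t)) :=
  statement17_general hA hA0 hsum hV hg hV'' hg''

end
end

section
/- Let d ≥ 1, β > 0 and let U ∈ C²(ℝ) satisfy (A0) and be uniformly strictly convex with C₁ ≤ U'' ≤ C₂ for constants 0 < C₁ ≤ C₂. Then for every a ∈ ℝ^{2d} and all indices i ≠ j in {1,…,2d}: C₁²/(4dβC₂) ≤ Cov_{ν_a}( U'(a_i − ·), U'(a_j − ·) ) ≤ C₂²/(4dβC₁). In particular, the one-step coarse graining preserves strict convexity in the convex case. -/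
/-!
Write `ν_a ∝ exp (-V)` with `V t = 2β ∑ₖ U (aₖ - t)`. A covariance is half the average of the
kernel `(f s - f t) (g s - g t)` over `ν_a ⊗ ν_a`, so slope bounds on `f` and `g` compare it with
the variance of the identity: the maps `t ↦ -U' (aᵢ - t)` have slopes in `[C₁, C₂]`, whence
`C₁² Var ≤ Cov ≤ C₂² Var`. Integrating by parts against `exp (-V)` gives `Cov (t, V') = 1`, and
`V'` has slopes in `[4dβC₁, 4dβC₂]`, whence `1 / (4dβC₂) ≤ Var ≤ 1 / (4dβC₁)`. The same convexity
makes `exp (-V)` Gaussian-dominated, which supplies all the integrability.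
-/

open MeasureTheory Real Filter

noncomputable section

def SlopesIn (m M : ℝ) (φ : ℝ → ℝ) : Prop :=
  ∀ ⦃x y : ℝ⦄, x ≤ y → m * (y - x) ≤ φ y - φ x ∧ φ y - φ x ≤ M * (y - x)

theorem slopesIn_id : SlopesIn 1 1 fun t => t := fun _ _ _ => by simp

namespace SlopesIn

variable {m M : ℝ} {φ : ℝ → ℝ}

theorem of_deriv (hφ : Differentiable ℝ φ) (h : ∀ x, m ≤ deriv φ x ∧ deriv φ x ≤ M) :
    SlopesIn m M φ := fun _ _ hxy =>
  ⟨mul_sub_le_image_sub_of_le_deriv hφ (fun x => (h x).1) hxy,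
    image_sub_le_mul_sub_of_deriv_le hφ (fun x => (h x).2) hxy⟩

theorem neg_comp_const_sub (h : SlopesIn m M φ) (c : ℝ) : SlopesIn m M fun t => -φ (c - t) := by
  intro x y hxy
  have hc := h (sub_le_sub_left hxy c)
  rw [sub_sub_sub_cancel_left] at hc
  constructor <;> linarith [hc.1, hc.2]

theorem const_mul (h : SlopesIn m M φ) {c : ℝ} (hc : 0 ≤ c) :
    SlopesIn (c * m) (c * M) fun t => c * φ t := by
  intro x y hxy
  rw [← mul_sub, mul_assoc, mul_assoc]
  exact ⟨mul_le_mul_of_nonneg_left (h hxy).1 hc, mul_le_mul_of_nonneg_left (h hxy).2 hc⟩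

theorem sum {ι : Type*} (s : Finset ι) {φ : ι → ℝ → ℝ} (h : ∀ k ∈ s, SlopesIn m M (φ k)) :
    SlopesIn (s.card * m) (s.card * M) fun t => ∑ k ∈ s, φ k t := by
  intro x y hxy
  simp only [← Finset.sum_sub_distrib, ← nsmul_eq_mul, ← Finset.sum_const, Finset.sum_mul]
  exact ⟨Finset.sum_le_sum fun k hk => (h k hk hxy).1,
    Finset.sum_le_sum fun k hk => (h k hk hxy).2⟩

theorem le (h : SlopesIn m M φ) : m ≤ M := by
  simpa using (h zero_le_one).1.trans (h zero_le_one).2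

theorem abs_sub_le (h : SlopesIn m M φ) (hm : 0 ≤ m) (x y : ℝ) :
    |φ x - φ y| ≤ M * |x - y| := by
  rcases le_total y x with hyx | hxy
  · obtain ⟨h₁, h₂⟩ := h hyx
    rw [abs_of_nonneg (sub_nonneg.2 hyx), abs_of_nonneg (by nlinarith)]
    exact h₂
  · obtain ⟨h₁, h₂⟩ := h hxy
    rw [abs_sub_comm, abs_sub_comm x, abs_of_nonneg (sub_nonneg.2 hxy),
      abs_of_nonneg (by nlinarith)]
    exact h₂

theorem continuous (h : SlopesIn m M φ) (hm : 0 ≤ m) : Continuous φ := by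
  refine (LipschitzWith.of_dist_le_mul (K := M.toNNReal) fun x y => ?_).continuous
  simp only [Real.dist_eq, Real.coe_toNNReal']
  exact (h.abs_sub_le hm x y).trans
    (mul_le_mul_of_nonneg_right (le_max_left M 0) (abs_nonneg _))

theorem sq_le (h : SlopesIn m M φ) (hm : 0 ≤ m) (t : ℝ) :
    φ t ^ 2 ≤ 2 * φ 0 ^ 2 + 2 * M ^ 2 * t ^ 2 := by
  have hM : |φ t - φ 0| ≤ |M * t| := by
    simpa [abs_mul, abs_of_nonneg (hm.trans h.le)] using h.abs_sub_le hm t 0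
  nlinarith [sq_le_sq.2 hM, sq_nonneg (φ t - 2 * φ 0)]

end SlopesIn

theorem SlopesIn.memLp_two {m M : ℝ} {φ : ℝ → ℝ} {ν : Measure ℝ} [IsFiniteMeasure ν]
    (h : SlopesIn m M φ) (hm : 0 ≤ m) (hν : Integrable (fun t => t ^ 2) ν) : MemLp φ 2 ν := by
  rw [memLp_two_iff_integrable_sq (h.continuous hm).aestronglyMeasurable]
  refine ((integrable_const (2 * φ 0 ^ 2)).add (hν.const_mul (2 * M ^ 2))).mono'
    (((h.continuous hm).pow 2).aestronglyMeasurable) (ae_of_all _ fun t => ?_)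
  rw [Real.norm_of_nonneg (sq_nonneg _)]
  exact h.sq_le hm t

section Covariance

variable {ν : Measure ℝ} {f g p q : ℝ → ℝ}

theorem covM_neg_neg (ν : Measure ℝ) (f g : ℝ → ℝ) :
    covM ν (fun t => -f t) (fun t => -g t) = covM ν f g := by
  simp only [covM, neg_mul_neg, integral_neg]

theorem covM_const_mul_left (ν : Measure ℝ) (c : ℝ) (f g : ℝ → ℝ) :
    covM ν (fun t => c * f t) g = c * covM ν f g := by
  simp only [covM, mul_assoc, integral_const_mul]
  ring

variable [IsProbabilityMeasure ν]

theorem integrable_sub_mul_sub_prod_s17 (hf : MemLp f 2 ν) (hg : MemLp g 2 ν) :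
    Integrable (fun z : ℝ × ℝ => (f z.1 - f z.2) * (g z.1 - g z.2)) (ν.prod ν) :=
  ((hf.comp_fst ν).sub (hf.comp_snd ν)).integrable_mul ((hg.comp_fst ν).sub (hg.comp_snd ν))

theorem covM_eq_integral_prod (hf : MemLp f 2 ν) (hg : MemLp g 2 ν) :
    covM ν f g = (∫ z, (f z.1 - f z.2) * (g z.1 - g z.2) ∂ν.prod ν) / 2 := by
  have hf₁ := hf.integrable one_le_two
  have hg₁ := hg.integrable one_le_two
  have hfg : Integrable (fun t => f t * g t) ν := hf.integrable_mul hg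
  have hexp : (fun z : ℝ × ℝ => (f z.1 - f z.2) * (g z.1 - g z.2)) = fun z =>
      f z.1 * g z.1 + f z.2 * g z.2 - f z.1 * g z.2 - g z.1 * f z.2 := by
    ext z; ring
  have h₁ : Integrable (fun z : ℝ × ℝ => f z.1 * g z.1) (ν.prod ν) := hfg.comp_fst ν
  have h₂ : Integrable (fun z : ℝ × ℝ => f z.2 * g z.2) (ν.prod ν) := hfg.comp_snd ν
  have h₁₂ : Integrable (fun z : ℝ × ℝ => f z.1 * g z.1 + f z.2 * g z.2) (ν.prod ν) := h₁.add h₂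
  have h₃ : Integrable (fun z : ℝ × ℝ => f z.1 * g z.2) (ν.prod ν) := hf₁.mul_prod hg₁
  have h₁₂₃ : Integrable (fun z : ℝ × ℝ => f z.1 * g z.1 + f z.2 * g z.2 - f z.1 * g z.2)
      (ν.prod ν) := h₁₂.sub h₃
  rw [hexp, integral_sub h₁₂₃ (hg₁.mul_prod hf₁), integral_sub h₁₂ h₃, integral_add h₁ h₂,
    integral_fun_fst (fun t => f t * g t), integral_fun_snd (fun t => f t * g t),
    integral_prod_mul, integral_prod_mul, probReal_univ, one_smul, covM]
  ring

theorem covM_le_covM_of_sub_mul_sub_le (hp : MemLp p 2 ν) (hq : MemLp q 2 ν)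
    (hf : MemLp f 2 ν) (hg : MemLp g 2 ν)
    (h : ∀ s t, (p s - p t) * (q s - q t) ≤ (f s - f t) * (g s - g t)) :
    covM ν p q ≤ covM ν f g := by
  rw [covM_eq_integral_prod hp hq, covM_eq_integral_prod hf hg]
  exact div_le_div_of_nonneg_right (integral_mono (integrable_sub_mul_sub_prod_s17 hp hq)
    (integrable_sub_mul_sub_prod_s17 hf hg) fun z => h z.1 z.2) zero_le_two

theorem SlopesIn.mul_sq_le_sub_mul_sub {m₁ M₁ m₂ M₂ : ℝ} (hf : SlopesIn m₁ M₁ f)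
    (hg : SlopesIn m₂ M₂ g) (hm₁ : 0 ≤ m₁) (hm₂ : 0 ≤ m₂) (s t : ℝ) :
    m₁ * m₂ * (s - t) ^ 2 ≤ (f s - f t) * (g s - g t) ∧
      (f s - f t) * (g s - g t) ≤ M₁ * M₂ * (s - t) ^ 2 := by
  have key : ∀ ⦃s t⦄, t ≤ s → m₁ * m₂ * (s - t) ^ 2 ≤ (f s - f t) * (g s - g t) ∧
      (f s - f t) * (g s - g t) ≤ M₁ * M₂ * (s - t) ^ 2 := by
    intro s t hts
    obtain ⟨hf₁, hf₂⟩ := hf hts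
    obtain ⟨hg₁, hg₂⟩ := hg hts
    have hf₀ : 0 ≤ m₁ * (s - t) := mul_nonneg hm₁ (sub_nonneg.2 hts)
    have hg₀ : 0 ≤ m₂ * (s - t) := mul_nonneg hm₂ (sub_nonneg.2 hts)
    constructor
    · calc m₁ * m₂ * (s - t) ^ 2 = (m₁ * (s - t)) * (m₂ * (s - t)) := by ring
        _ ≤ (f s - f t) * (g s - g t) := mul_le_mul hf₁ hg₁ hg₀ (hf₀.trans hf₁)
    · calc (f s - f t) * (g s - g t) ≤ (M₁ * (s - t)) * (M₂ * (s - t)) :=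
            mul_le_mul hf₂ hg₂ (hg₀.trans hg₁) (hf₀.trans (hf₁.trans hf₂))
        _ = M₁ * M₂ * (s - t) ^ 2 := by ring
  rcases le_total t s with hts | hst
  · exact key hts
  · obtain ⟨h₁, h₂⟩ := key hst
    constructor <;> linarith

theorem SlopesIn.mul_varId_le_covM {m₁ M₁ m₂ M₂ : ℝ} (hf : SlopesIn m₁ M₁ f)
    (hg : SlopesIn m₂ M₂ g) (hm₁ : 0 ≤ m₁) (hm₂ : 0 ≤ m₂) (hν : Integrable (fun t => t ^ 2) ν) :
    m₁ * m₂ * varId ν ≤ covM ν f g ∧ covM ν f g ≤ M₁ * M₂ * varId ν := by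
  have hid := slopesIn_id.memLp_two zero_le_one hν
  have hf₂ := hf.memLp_two hm₁ hν
  have hg₂ := hg.memLp_two hm₂ hν
  rw [varId, ← covM_const_mul_left, ← covM_const_mul_left]
  constructor
  · refine covM_le_covM_of_sub_mul_sub_le (hid.const_mul _) hid hf₂ hg₂ fun s t => ?_
    calc _ = m₁ * m₂ * (s - t) ^ 2 := by ring
      _ ≤ _ := (hf.mul_sq_le_sub_mul_sub hg hm₁ hm₂ s t).1
  · refine covM_le_covM_of_sub_mul_sub_le hf₂ hg₂ (hid.const_mul _) hid fun s t => ?_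
    calc _ ≤ M₁ * M₂ * (s - t) ^ 2 := (hf.mul_sq_le_sub_mul_sub hg hm₁ hm₂ s t).2
      _ = _ := by ring

end Covariance

def gibbs (V : ℝ → ℝ) : Measure ℝ :=
  volume.withDensity fun t => ENNReal.ofReal (exp (-V t) / ∫ s, exp (-V s))

section Gibbs

variable {V : ℝ → ℝ}

theorem integral_gibbs (hVc : Continuous V) (φ : ℝ → ℝ) :
    ∫ t, φ t ∂gibbs V = (∫ t, φ t * exp (-V t)) / ∫ t, exp (-V t) := by
  have hZ : 0 ≤ ∫ t, exp (-V t) := integral_nonneg fun t => (exp_pos _).le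
  rw [gibbs, integral_withDensity_eq_integral_toReal_smul (by fun_prop)
    (ae_of_all _ fun _ => ENNReal.ofReal_lt_top), ← integral_div]
  congr 1 with t
  rw [ENNReal.toReal_ofReal (div_nonneg (exp_pos _).le hZ), smul_eq_mul]
  ring

theorem integrable_gibbs_iff (hVc : Continuous V) (hint : Integrable fun t => exp (-V t))
    {φ : ℝ → ℝ} : Integrable φ (gibbs V) ↔ Integrable fun t => φ t * exp (-V t) := by
  have hZ : (∫ t, exp (-V t))⁻¹ ≠ 0 := inv_ne_zero (integral_exp_pos hint).ne'
  rw [gibbs, integrable_withDensity_iff_integrable_smul' (by fun_prop)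
    (ae_of_all _ fun _ => ENNReal.ofReal_lt_top),
    ← integrable_const_mul_iff hZ.isUnit fun t => φ t * exp (-V t)]
  refine integrable_congr (ae_of_all _ fun t => ?_)
  dsimp only
  rw [ENNReal.toReal_ofReal (div_nonneg (exp_pos _).le (integral_exp_pos hint).le), smul_eq_mul]
  ring

theorem isProbabilityMeasure_gibbs (hint : Integrable fun t => exp (-V t)) :
    IsProbabilityMeasure (gibbs V) := by
  refine ⟨?_⟩
  rw [gibbs, withDensity_apply _ MeasurableSet.univ, Measure.restrict_univ,
    ← ofReal_integral_eq_lintegral_ofReal (hint.div_const _)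
      (ae_of_all _ fun _ => div_nonneg (exp_pos _).le (integral_exp_pos hint).le),
    integral_div, div_self (integral_exp_pos hint).ne', ENNReal.ofReal_one]

end Gibbs

section ConvexPotential

variable {V V' : ℝ → ℝ} {c₁ c₂ : ℝ}

theorem SlopesIn.quadratic_le (hV : ∀ t, HasDerivAt V (V' t) t) (hV' : SlopesIn c₁ c₂ V')
    (t : ℝ) : V 0 + V' 0 * t + c₁ / 2 * t ^ 2 ≤ V t := by
  set h : ℝ → ℝ := fun s => V s - V' 0 * s - c₁ / 2 * s ^ 2
  have hh : ∀ s, HasDerivAt h (V' s - V' 0 - c₁ * s) s := fun s =>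
    (((hV s).fun_sub ((hasDerivAt_id' s).const_mul (V' 0))).fun_sub
      ((hasDerivAt_pow 2 s).const_mul (c₁ / 2))).congr_deriv (by ring)
  have hcont : Continuous h := continuous_iff_continuousAt.2 fun s => (hh s).continuousAt
  suffices h 0 ≤ h t by simp only [h] at this; linarith
  rcases le_total 0 t with ht | ht
  · refine monotoneOn_of_hasDerivWithinAt_nonneg (convex_Ici 0) hcont.continuousOn
      (fun s _ => (hh s).hasDerivWithinAt) (fun s hs => ?_) (Set.mem_Ici.2 le_rfl) ht ht
    rw [interior_Ici] at hs
    linarith [(hV' (le_of_lt hs)).1]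
  · refine antitoneOn_of_hasDerivWithinAt_nonpos (convex_Iic 0) hcont.continuousOn
      (fun s _ => (hh s).hasDerivWithinAt) (fun s hs => ?_) ht (Set.mem_Iic.2 le_rfl) ht
    rw [interior_Iic] at hs
    linarith [(hV' (le_of_lt hs)).1]

theorem exists_exp_neg_le_gaussian (hV : ∀ t, HasDerivAt V (V' t) t) (hV' : SlopesIn c₁ c₂ V')
    (hc₁ : 0 < c₁) : ∃ K, ∀ t, exp (-V t) ≤ K * exp (-(c₁ / 4) * t ^ 2) := by
  refine ⟨exp (V' 0 ^ 2 / c₁ - V 0), fun t => ?_⟩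
  rw [← exp_add, exp_le_exp]
  have hsq : 0 ≤ (c₁ * t / 2 + V' 0) ^ 2 / c₁ := div_nonneg (sq_nonneg _) hc₁.le
  have hsquare : (c₁ * t / 2 + V' 0) ^ 2 / c₁ = c₁ / 4 * t ^ 2 + V' 0 * t + V' 0 ^ 2 / c₁ := by
    field_simp
    ring
  linarith [hV'.quadratic_le hV t]

theorem integrable_mul_exp_neg (hV : ∀ t, HasDerivAt V (V' t) t) (hV' : SlopesIn c₁ c₂ V')
    (hc₁ : 0 < c₁) {p : ℝ → ℝ} (hp : AEStronglyMeasurable p) {M : ℝ}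
    (hM : ∀ t, |p t| ≤ M * (1 + t ^ 2)) : Integrable fun t => p t * exp (-V t) := by
  obtain ⟨K, hK⟩ := exists_exp_neg_le_gaussian hV hV' hc₁
  have hε : 0 < c₁ / 4 := by positivity
  have hmom : Integrable fun t : ℝ => t ^ 2 * exp (-(c₁ / 4) * t ^ 2) := by
    simpa only [Real.rpow_two] using integrable_rpow_mul_exp_neg_mul_sq hε (s := 2) (by norm_num)
  have hVc : Continuous V := continuous_iff_continuousAt.2 fun t => (hV t).continuousAt
  refine (((integrable_exp_neg_mul_sq hε).add hmom).const_mul (M * K)).mono'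
    (hp.mul (by fun_prop : Continuous fun t => exp (-V t)).aestronglyMeasurable)
    (ae_of_all _ fun t => ?_)
  rw [norm_mul, Real.norm_of_nonneg (exp_pos _).le, Real.norm_eq_abs]
  calc |p t| * exp (-V t) ≤ M * (1 + t ^ 2) * (K * exp (-(c₁ / 4) * t ^ 2)) :=
        mul_le_mul (hM t) (hK t) (exp_pos _).le ((abs_nonneg _).trans (hM t))
    _ = _ := by simp only [Pi.add_apply]; ring

theorem integrable_exp_neg (hV : ∀ t, HasDerivAt V (V' t) t) (hV' : SlopesIn c₁ c₂ V')
    (hc₁ : 0 < c₁) : Integrable fun t => exp (-V t) := by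
  simpa using integrable_mul_exp_neg hV hV' hc₁ (p := fun _ => 1)
    aestronglyMeasurable_const (M := 1) fun t => by
      rw [abs_one, one_mul]
      exact le_add_of_nonneg_right (sq_nonneg t)

theorem integrable_sq_gibbs (hV : ∀ t, HasDerivAt V (V' t) t) (hV' : SlopesIn c₁ c₂ V')
    (hc₁ : 0 < c₁) : Integrable (fun t => t ^ 2) (gibbs V) := by
  have hVc : Continuous V := continuous_iff_continuousAt.2 fun t => (hV t).continuousAt
  refine (integrable_gibbs_iff hVc (integrable_exp_neg hV hV' hc₁)).2 <|
    integrable_mul_exp_neg hV hV' hc₁ (continuous_pow 2).aestronglyMeasurable (M := 1) fun t => ?_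
  rw [abs_of_nonneg (sq_nonneg t)]
  linarith

theorem covM_id_deriv_gibbs (hV : ∀ t, HasDerivAt V (V' t) t) (hV' : SlopesIn c₁ c₂ V')
    (hc₁ : 0 < c₁) : covM (gibbs V) (fun t => t) V' = 1 := by
  have hVc : Continuous V := continuous_iff_continuousAt.2 fun t => (hV t).continuousAt
  have hint := integrable_exp_neg hV hV' hc₁
  have hZ := integral_exp_pos hint
  have := isProbabilityMeasure_gibbs hint
  have h₂ := integrable_sq_gibbs hV hV' hc₁
  have hid := slopesIn_id.memLp_two zero_le_one h₂
  have hV'₂ := hV'.memLp_two hc₁.le h₂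
  have hiff := @integrable_gibbs_iff V hVc hint
  have hidV' : Integrable fun t => t * V' t * exp (-V t) := hiff.1 (hid.integrable_mul hV'₂)
  -- integration by parts against `exp (-V)`, whose derivative is `-V' exp (-V)`
  have hstein₀ : ∫ t, V' t * exp (-V t) = 0 :=
    integral_eq_zero_of_hasDerivAt_of_integrable (f := fun t => -exp (-V t))
      (fun t => (hV t).neg.exp.neg.congr_deriv (by simp only [Pi.neg_apply]; ring))
      (hiff.1 (hV'₂.integrable one_le_two)) hint.neg
  have hstein₁ : ∫ t, (t * V' t * exp (-V t) - exp (-V t)) = 0 :=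
    integral_eq_zero_of_hasDerivAt_of_integrable (f := fun t => -(t * exp (-V t)))
      (fun t => ((hasDerivAt_id' t).mul (hV t).neg.exp).neg.congr_deriv
        (by simp only [Pi.neg_apply]; ring))
      (hidV'.sub hint) (hiff.1 (hid.integrable one_le_two)).neg
  rw [integral_sub hidV' hint, sub_eq_zero] at hstein₁
  rw [covM, integral_gibbs hVc V', hstein₀, zero_div, mul_zero, sub_zero, integral_gibbs hVc,
    hstein₁, div_self hZ.ne']

theorem varId_gibbs_mem_Icc (hV : ∀ t, HasDerivAt V (V' t) t) (hV' : SlopesIn c₁ c₂ V')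
    (hc₁ : 0 < c₁) : varId (gibbs V) ∈ Set.Icc c₂⁻¹ c₁⁻¹ := by
  have := isProbabilityMeasure_gibbs (integrable_exp_neg hV hV' hc₁)
  obtain ⟨h₁, h₂⟩ :=
    slopesIn_id.mul_varId_le_covM hV' zero_le_one hc₁.le (integrable_sq_gibbs hV hV' hc₁)
  rw [covM_id_deriv_gibbs hV hV' hc₁, one_mul] at h₁ h₂
  exact ⟨(inv_le_iff_one_le_mul₀' (hc₁.trans_le hV'.le)).2 h₂,
    by rw [← one_div, le_div_iff₀' hc₁]; exact h₁⟩

end ConvexPotential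

theorem nuSite_eq_gibbs (β : ℝ) (d : ℕ) (U : ℝ → ℝ) (a : Fin (2*d) → ℝ) :
    nuSite β d U a = gibbs fun t => 2 * β * ∑ k, U (a k - t) := by
  simp only [nuSite, Zsite, siteWeight, gibbs, neg_mul]

theorem statement18_general
    {d : ℕ} {β C₁ C₂ : ℝ} {U : ℝ → ℝ}
    (hd : 1 ≤ d) (hβ : 0 < β)
    -- uniform strict convexity
    (hU : ContDiff ℝ 2 U)
    (hC₁ : 0 < C₁)
    (hU'' : ∀ s, C₁ ≤ deriv (deriv U) s ∧ deriv (deriv U) s ≤ C₂) :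
    ∀ (a : Fin (2*d) → ℝ) (i j : Fin (2*d)), i ≠ j →
      C₁^2/(4*d*β*C₂) ≤ covM (nuSite β d U a)
          (fun t => deriv U (a i - t)) (fun t => deriv U (a j - t)) ∧
      covM (nuSite β d U a)
          (fun t => deriv U (a i - t)) (fun t => deriv U (a j - t))
        ≤ C₂^2/(4*d*β*C₁) := by
  intro a i j _
  have hU' : SlopesIn C₁ C₂ (deriv U) := .of_deriv hU.differentiable_deriv_two hU''
  set V' : ℝ → ℝ := fun t => 2 * β * ∑ k, -deriv U (a k - t)
  have hV : ∀ t, HasDerivAt (fun t => 2 * β * ∑ k, U (a k - t)) (V' t) t := fun t =>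
    (HasDerivAt.fun_sum fun k _ => ((hU.differentiable two_ne_zero _).hasDerivAt.comp t
      ((hasDerivAt_id' t).const_sub (a k))).congr_deriv (mul_neg_one _)).const_mul (2 * β)
  have hV' : SlopesIn (4 * d * β * C₁) (4 * d * β * C₂) V' := by
    convert ((SlopesIn.sum Finset.univ fun k _ => hU'.neg_comp_const_sub (a k)).const_mul
      (by positivity : 0 ≤ 2 * β)) using 1 <;>
    · simp only [Finset.card_univ, Fintype.card_fin]
      push_cast
      ring
  have hc₁ : 0 < 4 * d * β * C₁ := by
    have : (1 : ℝ) ≤ d := by exact_mod_cast hd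
    positivity
  have := isProbabilityMeasure_gibbs (integrable_exp_neg hV hV' hc₁)
  obtain ⟨hvar₁, hvar₂⟩ := varId_gibbs_mem_Icc hV hV' hc₁
  obtain ⟨hcov₁, hcov₂⟩ := (hU'.neg_comp_const_sub (a i)).mul_varId_le_covM
    (hU'.neg_comp_const_sub (a j)) hC₁.le hC₁.le (integrable_sq_gibbs hV hV' hc₁)
  rw [covM_neg_neg] at hcov₁ hcov₂
  rw [nuSite_eq_gibbs]
  constructor
  · calc C₁ ^ 2 / (4 * d * β * C₂) = C₁ * C₁ * (4 * d * β * C₂)⁻¹ := by ring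
      _ ≤ C₁ * C₁ * varId (gibbs _) := mul_le_mul_of_nonneg_left hvar₁ (mul_self_nonneg C₁)
      _ ≤ _ := hcov₁
  · calc _ ≤ C₂ * C₂ * varId (gibbs _) := hcov₂
      _ ≤ C₂ * C₂ * (4 * d * β * C₁)⁻¹ := mul_le_mul_of_nonneg_left hvar₂ (mul_self_nonneg C₂)
      _ = C₂ ^ 2 / (4 * d * β * C₁) := by ring

/-- **Statement 18** (Remark 4.11: one-step coarse graining preserves strict
convexity for uniformly strictly convex `U`). -/
theorem statement18
    {d : ℕ} {β A B C₁ C₂ : ℝ} {U : ℝ → ℝ}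
    (hd : 1 ≤ d) (hβ : 0 < β)
    -- (A0)
    (hA : 0 < A) (hA0 : ∀ η : ℝ, A * η ^ 2 - B ≤ U η)
    -- uniform strict convexity
    (hU : ContDiff ℝ 2 U)
    (hC₁ : 0 < C₁) (hC₁₂ : C₁ ≤ C₂)
    (hU'' : ∀ s, C₁ ≤ deriv (deriv U) s ∧ deriv (deriv U) s ≤ C₂) :
    ∀ (a : Fin (2*d) → ℝ) (i j : Fin (2*d)), i ≠ j →
      C₁^2/(4*d*β*C₂) ≤ covM (nuSite β d U a)
          (fun t => deriv U (a i - t)) (fun t => deriv U (a j - t)) ∧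
      covM (nuSite β d U a)
          (fun t => deriv U (a i - t)) (fun t => deriv U (a j - t))
        ≤ C₂^2/(4*d*β*C₁) :=
  statement18_general hd hβ hU hC₁ hU''
end
end
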